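/- arXiv:2304.06515 — 3 statements merged into one kernel-verified Lean document; each statement's English description precedes it below -/
import Mathlib

section
/- Let f be integrable in the generalized sense on [0,∞[ with homogeneous coefficients f_k at 0 (so f(r) − Σ_{k∈Ω} f_k r^k is integrable on ]0,1[ and f is integrable on [1,∞[). Then gen∫₀^∞ f(r) dr = lim_{δ→0⁺} ( ∫_δ^∞ f(r) dr + Σ_{k∈Ω, k≠−1} f_k δ^{k+1}/(k+1) + f_{−1} ln δ ). -/
/-!
Split `∫_δ^∞ f` at `1` and, on `[δ, 1]`, write `f` as the integrable remainder
`g = f - ∑ c k r ^ k` plus the homogeneous terms. These integrate explicitly to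
`c k (1 - δ ^ (k + 1)) / (k + 1)`, resp. `-c (-1) log δ`, so their `δ`-dependent parts cancel
the correction terms exactly. What is left is `genInt f Ω c` with `∫_0^1 g` replaced by
`∫_δ^1 g`, and the latter tends to `∫_0^1 g` by continuity of the primitive of an integrable
function.
-/

open MeasureTheory Set Complex Real

/-- The generalized integral of `f` over `[0,∞[` with respect to the data
`(Ω, c)` of homogeneous terms `c k * r ^ k`, `k ∈ Ω`, at `0`. -/
noncomputable def genInt (f : ℝ → ℂ) (Ω : Finset ℂ) (c : ℂ → ℂ) : ℂ :=
  (∑ k ∈ Ω, if k = -1 then 0 else c k / (k + 1))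
  + (∫ r in Ioo (0:ℝ) 1, (f r - ∑ k ∈ Ω, c k * (r : ℂ) ^ k))
  + ∫ r in Ioi (1:ℝ), f r

/-- `f` is integrable in the generalized sense with data `(Ω, c)`:
it is integrable on `]1,∞[` and, after subtracting the homogeneous terms,
integrable on `]0,1[`. -/
def GenIntegrable (f : ℝ → ℂ) (Ω : Finset ℂ) (c : ℂ → ℂ) : Prop :=
  IntegrableOn f (Ioi 1) ∧
  IntegrableOn (fun r => f r - ∑ k ∈ Ω, c k * (r : ℂ) ^ k) (Ioo 0 1)

open Filter Topology Interval

theorem tendsto_intervalIntegral_nhdsGT {E : Type*} [NormedAddCommGroup E] [NormedSpace ℝ E]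
    {μ : Measure ℝ} [NullSingletonClass μ] {g : ℝ → E} {a b : ℝ} (hab : a < b)
    (hg : IntegrableOn g (Ioo a b) μ) :
    Tendsto (fun x => ∫ t in x..b, g t ∂μ) (𝓝[>] a) (𝓝 (∫ t in a..b, g t ∂μ)) := by
  have hg' : IntervalIntegrable g μ a b :=
    (intervalIntegrable_iff_integrableOn_Ioo_of_le hab.le).2 hg
  have hcont : ContinuousOn (fun x => -∫ t in b..x, g t ∂μ) [[a, b]] :=
    (intervalIntegral.continuousOn_primitive_interval' hg' right_mem_uIcc).neg
  simp only [← intervalIntegral.integral_symm] at hcont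
  refine (hcont a left_mem_uIcc).mono_of_mem_nhdsWithin ?_
  rw [uIcc_of_le hab.le]
  exact Icc_mem_nhdsGT hab

noncomputable def cpowPrimitive (k : ℂ) (x : ℝ) : ℂ :=
  if k = -1 then Real.log x else (x : ℂ) ^ (k + 1) / (k + 1)

theorem integral_cpow_eq_cpowPrimitive_sub (k : ℂ) {a b : ℝ} (ha : 0 < a) (hb : 0 < b) :
    ∫ x in a..b, (x : ℂ) ^ k = cpowPrimitive k b - cpowPrimitive k a := by
  have hzero : (0 : ℝ) ∉ [[a, b]] := fun h => (lt_min ha hb).not_ge h.1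
  unfold cpowPrimitive
  split_ifs with hk
  · subst hk
    simp only [Complex.cpow_neg_one, ← Complex.ofReal_inv, intervalIntegral.integral_ofReal,
      integral_inv hzero, Real.log_div hb.ne' ha.ne', Complex.ofReal_sub]
  · rw [integral_cpow (Or.inr ⟨hk, hzero⟩), sub_div]

theorem intervalIntegrable_sum_mul_cpow (Ω : Finset ℂ) (c : ℂ → ℂ) {a b : ℝ}
    (hzero : (0 : ℝ) ∉ [[a, b]]) :
    IntervalIntegrable (fun r : ℝ => ∑ k ∈ Ω, c k * (r : ℂ) ^ k) volume a b := by
  simpa only [Finset.sum_fn] using IntervalIntegrable.sum Ω fun k _ =>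
    (intervalIntegral.intervalIntegrable_cpow (Or.inr hzero)).const_mul (c k)

theorem sum_ite_add_mul_log_eq_sum_cpowPrimitive (Ω : Finset ℂ) (c : ℂ → ℂ) (x : ℝ) :
    (∑ k ∈ Ω, if k = -1 then 0 else c k * (x : ℂ) ^ (k + 1) / (k + 1))
      + (if (-1 : ℂ) ∈ Ω then c (-1) else 0) * Real.log x
      = ∑ k ∈ Ω, c k * cpowPrimitive k x := by
  rw [ite_mul, zero_mul, ← Finset.sum_ite_eq' Ω (-1) fun k => c k * Real.log x,
    ← Finset.sum_add_distrib]
  refine Finset.sum_congr rfl fun k _ => ?_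
  by_cases hk : k = -1
  · simp [cpowPrimitive, hk]
  · simp [cpowPrimitive, hk, mul_div_assoc]

theorem setIntegral_Ioi_add_sum_cpowPrimitive {f : ℝ → ℂ} {Ω : Finset ℂ} {c : ℂ → ℂ}
    (h : GenIntegrable f Ω c) {δ : ℝ} (hδ : δ ∈ Ioo 0 1) :
    (∫ r in Ioi δ, f r) + ∑ k ∈ Ω, c k * cpowPrimitive k δ
      = ∑ k ∈ Ω, c k * cpowPrimitive k 1
        + (∫ r in δ..1, f r - ∑ k ∈ Ω, c k * (r : ℂ) ^ k) + ∫ r in Ioi 1, f r := by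
  set p := fun r : ℝ => ∑ k ∈ Ω, c k * (r : ℂ) ^ k
  have hzero : (0 : ℝ) ∉ [[δ, 1]] := by
    rw [uIcc_of_le hδ.2.le]
    exact fun h0 => hδ.1.not_ge h0.1
  have hp : IntervalIntegrable p volume δ 1 := intervalIntegrable_sum_mul_cpow Ω c hzero
  have hg : IntervalIntegrable (fun r => f r - p r) volume δ 1 :=
    (intervalIntegrable_iff_integrableOn_Ioo_of_le hδ.2.le).2
      (h.2.mono_set (Ioo_subset_Ioo_left hδ.1.le))
  have hf : IntervalIntegrable f volume δ 1 := by simpa using hg.add hp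
  have hp_integral :
      ∫ r in δ..1, p r = ∑ k ∈ Ω, c k * (cpowPrimitive k 1 - cpowPrimitive k δ) := by
    rw [intervalIntegral.integral_finsetSum fun k _ =>
      (intervalIntegral.intervalIntegrable_cpow (Or.inr hzero)).const_mul (c k)]
    simp only [intervalIntegral.integral_const_mul,
      integral_cpow_eq_cpowPrimitive_sub _ hδ.1 one_pos]
  rw [← intervalIntegral.integral_interval_add_Ioi' hf h.1, intervalIntegral.integral_sub hf hp,
    hp_integral]
  simp only [mul_sub, Finset.sum_sub_distrib]
  ring

theorem genInt_eq_lim (f : ℝ → ℂ) (Ω : Finset ℂ) (c : ℂ → ℂ)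
    (h : GenIntegrable f Ω c) :
    Filter.Tendsto
      (fun δ : ℝ =>
        (∫ r in Ioi δ, f r)
        + (∑ k ∈ Ω, if k = -1 then 0 else c k * (δ : ℂ) ^ (k + 1) / (k + 1))
        + (if (-1 : ℂ) ∈ Ω then c (-1) else 0) * Real.log δ)
      (nhdsWithin 0 (Ioi 0)) (nhds (genInt f Ω c)) := by
  have hgenInt : genInt f Ω c = ∑ k ∈ Ω, c k * cpowPrimitive k 1
      + (∫ r in (0 : ℝ)..1, f r - ∑ k ∈ Ω, c k * (r : ℂ) ^ k) + ∫ r in Ioi 1, f r := by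
    have := sum_ite_add_mul_log_eq_sum_cpowPrimitive Ω c 1
    simp only [Complex.ofReal_one, Complex.one_cpow, Real.log_one, Complex.ofReal_zero,
      mul_one, mul_zero, add_zero] at this
    rw [genInt, this, intervalIntegral.integral_of_le zero_le_one, integral_Ioc_eq_integral_Ioo]
  rw [hgenInt]
  refine ((tendsto_const_nhds.add (tendsto_intervalIntegral_nhdsGT one_pos h.2)).add
    tendsto_const_nhds).congr' ?_
  filter_upwards [Ioo_mem_nhdsGT one_pos] with δ hδ
  rw [eq_comm, add_assoc, sum_ite_add_mul_log_eq_sum_cpowPrimitive,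
    setIntegral_Ioi_add_sum_cpowPrimitive h hδ]
end

section
/- For real α > 1/2 and real 0 < r < R, the Macdonald function satisfies the inequality K_α(r)/K_α(R) < e^{R−r} (R/r)^α. -/
/-!
Substituting `u = r s` in the defining integral gives `2 e^r r^α K_α(r) = J(r)`, where
`J(r) = ∫₀^∞ k_r(u) du` and `k_r(u) = exp (r - r²/(2u) - u/2) u^(α-1)`; so it suffices that `J`
is strictly increasing on `(0, ∞)`. Differentiating under the integral sign,
`J'(r) = ∫₀^∞ (1 - r/u) k_r(u) du`. The exponent of `k_r` is invariant under `u ↦ r²/u`, and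
this substitution rewrites `J'(r)` as `-∫₀^∞ (r/u)^(2α-1) (1 - r/u) k_r(u) du`. Averaging,
`2 J'(r) = ∫₀^∞ (1 - r/u) (1 - (r/u)^(2α-1)) k_r(u) du`, and this integrand is positive for
`u ≠ r` because `2α - 1 > 0`.
-/

open MeasureTheory Set Real

/-- The Macdonald function for real order and argument. -/
noncomputable def macdonaldK (α : ℝ) (r : ℝ) : ℝ :=
  (1 / 2) * ∫ s in Ioi (0:ℝ), Real.exp (-(r / 2) * (s + s⁻¹)) * s ^ (α - 1)

open scoped Nat

lemma exp_neg_div_le_factorial_div_pow_mul_pow {a u : ℝ} (ha : 0 < a) (hu : 0 < u) (n : ℕ) :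
    exp (-(a / u)) ≤ n ! / a ^ n * u ^ n :=
  calc exp (-(a / u)) = (exp (a / u))⁻¹ := exp_neg _
    _ ≤ ((a / u) ^ n / n !)⁻¹ :=
      inv_anti₀ (by positivity) (pow_div_factorial_le_exp _ (div_pos ha hu).le n)
    _ = n ! / a ^ n * u ^ n := by rw [inv_div, div_pow]; field_simp

lemma integrableOn_exp_neg_div_sub_mul_mul_rpow {a b : ℝ} (ha : 0 < a) (hb : 0 < b) (β : ℝ) :
    IntegrableOn (fun u => exp (-(a / u) - b * u) * u ^ β) (Ioi 0) := by
  set n := ⌈-β⌉₊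
  have hn : -β ≤ n := Nat.le_ceil _
  have hdom : IntegrableOn (fun u : ℝ => n ! / a ^ n * (u ^ (β + n) * exp (-b * u ^ (1 : ℝ))))
      (Ioi 0) :=
    (integrableOn_rpow_mul_exp_neg_mul_rpow (by linarith) one_pos hb).const_mul _
  refine hdom.mono' (by fun_prop) ((ae_restrict_iff' measurableSet_Ioi).2 (.of_forall
    fun u (hu : 0 < u) => ?_))
  rw [norm_of_nonneg (by positivity), rpow_one, rpow_add hu, rpow_natCast, sub_eq_add_neg,
    exp_add, ← neg_mul]
  calc exp (-(a / u)) * exp (-b * u) * u ^ β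
      ≤ n ! / a ^ n * u ^ n * exp (-b * u) * u ^ β := by
        gcongr; exact exp_neg_div_le_factorial_div_pow_mul_pow ha hu n
    _ = _ := by ring

lemma integrableOn_one_add_div_mul_exp_neg_div_sub_mul_mul_rpow {a b : ℝ} (ha : 0 < a)
    (hb : 0 < b) (c β : ℝ) :
    IntegrableOn (fun u => (1 + c / u) * (exp (-(a / u) - b * u) * u ^ β)) (Ioi 0) := by
  refine ((integrableOn_exp_neg_div_sub_mul_mul_rpow ha hb β).add
    ((integrableOn_exp_neg_div_sub_mul_mul_rpow ha hb (β - 1)).const_mul c)).congr_fun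
    (fun u (hu : 0 < u) => ?_) measurableSet_Ioi
  simp only [Pi.add_apply, rpow_sub_one hu.ne']
  ring

lemma image_const_div_Ioi_zero {c : ℝ} (hc : 0 < c) : (fun x => c / x) '' Ioi 0 = Ioi 0 := by
  ext y
  constructor
  · rintro ⟨x, hx, rfl⟩
    exact div_pos hc hx
  · intro (hy : 0 < y)
    exact ⟨c / y, div_pos hc hy, div_div_cancel₀ hc.ne'⟩

lemma hasDerivAt_const_div {𝕜 : Type*} [NontriviallyNormedField 𝕜] (c : 𝕜) {x : 𝕜}
    (hx : x ≠ 0) :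
    HasDerivAt (fun x => c / x) (-(c / x ^ 2)) x := by
  simpa [div_eq_mul_inv] using (hasDerivAt_inv hx).const_mul c

lemma div_right_injective₀ {G₀ : Type*} [CommGroupWithZero G₀] {c : G₀} (hc : c ≠ 0) :
    Function.Injective fun x : G₀ => c / x := fun x y h => by
  rw [← div_div_cancel₀ (b := x) hc, ← div_div_cancel₀ (b := y) hc]
  exact congrArg _ h

section SubstitutionConstDiv

variable {E : Type*} [NormedAddCommGroup E] [NormedSpace ℝ E]

lemma integral_comp_const_div_Ioi (g : ℝ → E) {c : ℝ} (hc : 0 < c) :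
    ∫ x in Ioi 0, (c / x ^ 2) • g (c / x) = ∫ y in Ioi 0, g y := by
  have h := integral_image_eq_integral_abs_deriv_smul measurableSet_Ioi
    (fun x (hx : 0 < x) => (hasDerivAt_const_div c hx.ne').hasDerivWithinAt)
    (div_right_injective₀ hc.ne').injOn g
  rw [image_const_div_Ioi_zero hc] at h
  rw [h]
  refine setIntegral_congr_fun measurableSet_Ioi fun x (hx : 0 < x) => ?_
  rw [abs_neg, abs_of_pos (by positivity)]

lemma integrableOn_Ioi_comp_const_div_iff (g : ℝ → E) {c : ℝ} (hc : 0 < c) :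
    IntegrableOn (fun x => (c / x ^ 2) • g (c / x)) (Ioi 0) ↔ IntegrableOn g (Ioi 0) := by
  have h := integrableOn_image_iff_integrableOn_abs_deriv_smul measurableSet_Ioi
    (fun x (hx : 0 < x) => (hasDerivAt_const_div c hx.ne').hasDerivWithinAt)
    (div_right_injective₀ hc.ne').injOn g
  rw [image_const_div_Ioi_zero hc] at h
  rw [h]
  refine integrableOn_congr_fun (fun x (hx : 0 < x) => ?_) measurableSet_Ioi
  rw [abs_neg, abs_of_pos (by positivity)]

end SubstitutionConstDiv

noncomputable def macdonaldKernel (α ρ u : ℝ) : ℝ :=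
  exp (ρ - ρ ^ 2 / (2 * u) - u / 2) * u ^ (α - 1)

noncomputable def macdonaldKernelDeriv (α ρ u : ℝ) : ℝ :=
  (1 - ρ / u) * macdonaldKernel α ρ u

section macdonaldKernel

variable (α : ℝ)

lemma macdonaldKernel_pos (ρ : ℝ) {u : ℝ} (hu : 0 < u) : 0 < macdonaldKernel α ρ u :=
  mul_pos (exp_pos _) (rpow_pos_of_pos hu _)

lemma macdonaldKernel_eq_exp_mul (ρ u : ℝ) :
    macdonaldKernel α ρ u = exp ρ * (exp (-((ρ ^ 2 / 2) / u) - 1 / 2 * u) * u ^ (α - 1)) := by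
  rw [macdonaldKernel, ← mul_assoc, ← exp_add]
  ring_nf

lemma macdonaldKernel_const_div {ρ u : ℝ} (hρ : 0 < ρ) (hu : 0 < u) :
    macdonaldKernel α ρ (ρ ^ 2 / u) = (ρ / u) ^ (2 * (α - 1)) * macdonaldKernel α ρ u := by
  have hexp :
      ρ - ρ ^ 2 / (2 * (ρ ^ 2 / u)) - ρ ^ 2 / u / 2 = ρ - ρ ^ 2 / (2 * u) - u / 2 := by
    field_simp; ring
  have hpow : (ρ ^ 2 / u) ^ (α - 1) = (ρ / u) ^ (2 * (α - 1)) * u ^ (α - 1) := by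
    rw [rpow_mul (div_pos hρ hu).le, ← mul_rpow (by positivity) hu.le, rpow_two]
    congr 1; field_simp
  rw [macdonaldKernel, macdonaldKernel, hexp, hpow]
  ring

lemma integral_macdonaldKernel {r : ℝ} (hr : 0 < r) :
    ∫ u in Ioi 0, macdonaldKernel α r u = 2 * (exp r * r ^ α * macdonaldK α r) := by
  have hscale : r • ∫ s in Ioi 0, macdonaldKernel α r (r * s) =
      ∫ u in Ioi (r * 0), macdonaldKernel α r u :=
    integral_comp_mul_left_Ioi' _ 0 hr
  rw [mul_zero, smul_eq_mul] at hscale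
  have hsubst : ∀ s ∈ Ioi (0 : ℝ), macdonaldKernel α r (r * s) =
      exp r * r ^ (α - 1) * (exp (-(r / 2) * (s + s⁻¹)) * s ^ (α - 1)) := by
    intro s (hs : 0 < s)
    have hexp : r - r ^ 2 / (2 * (r * s)) - r * s / 2 = r + -(r / 2) * (s + s⁻¹) := by
      field_simp; ring
    rw [macdonaldKernel, hexp, exp_add, mul_rpow hr.le hs.le]
    ring
  rw [← hscale, setIntegral_congr_fun measurableSet_Ioi hsubst, integral_const_mul, macdonaldK,
    rpow_sub_one hr.ne']
  field_simp

lemma integrableOn_macdonaldKernel {ρ : ℝ} (hρ : 0 < ρ) :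
    IntegrableOn (macdonaldKernel α ρ) (Ioi 0) :=
  IntegrableOn.congr_fun ((integrableOn_exp_neg_div_sub_mul_mul_rpow (a := ρ ^ 2 / 2)
    (by positivity) one_half_pos (α - 1)).const_mul (exp ρ))
    (fun u _ => (macdonaldKernel_eq_exp_mul α ρ u).symm) measurableSet_Ioi

lemma integrableOn_macdonaldKernelDeriv {ρ : ℝ} (hρ : 0 < ρ) :
    IntegrableOn (macdonaldKernelDeriv α ρ) (Ioi 0) := by
  refine IntegrableOn.congr_fun ((integrableOn_one_add_div_mul_exp_neg_div_sub_mul_mul_rpow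
    (a := ρ ^ 2 / 2) (by positivity) one_half_pos (-ρ) (α - 1)).const_mul (exp ρ))
    (fun u _ => ?_) measurableSet_Ioi
  rw [macdonaldKernelDeriv, macdonaldKernel_eq_exp_mul]
  ring

lemma hasDerivAt_macdonaldKernel (ρ u : ℝ) :
    HasDerivAt (macdonaldKernel α · u) (macdonaldKernelDeriv α ρ u) ρ := by
  have hexp : HasDerivAt (fun y => y - y ^ 2 / (2 * u) - u / 2) (1 - ρ / u) ρ :=
    (((hasDerivAt_id ρ).sub ((hasDerivAt_pow 2 ρ).div_const (2 * u))).sub_const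
      (u / 2)).congr_deriv (by push_cast; ring)
  exact (hexp.exp.mul_const (u ^ (α - 1))).congr_deriv
    (by rw [macdonaldKernelDeriv, macdonaldKernel]; ring)

lemma norm_macdonaldKernelDeriv_le {ρ₀ x u : ℝ} (hx : x ∈ Ioo (ρ₀ / 2) (2 * ρ₀))
    (hu : 0 < u) :
    ‖macdonaldKernelDeriv α x u‖ ≤ exp (2 * ρ₀) *
      ((1 + 2 * ρ₀ / u) * (exp (-((ρ₀ ^ 2 / 8) / u) - 1 / 2 * u) * u ^ (α - 1))) := by
  obtain ⟨hx₁, hx₂⟩ := hx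
  have hx₀ : 0 < x := by linarith
  have hfactor : |1 - x / u| ≤ 1 + 2 * ρ₀ / u := by
    have : x / u ≤ 2 * ρ₀ / u := by gcongr
    rw [abs_le]; constructor <;> linarith [div_pos hx₀ hu]
  have hquad : ρ₀ ^ 2 / 8 / u ≤ x ^ 2 / (2 * u) := by
    rw [show ρ₀ ^ 2 / 8 / u = (ρ₀ / 2) ^ 2 / (2 * u) by ring]
    gcongr
    linarith
  have hexp : exp (x - x ^ 2 / (2 * u) - u / 2) ≤
      exp (2 * ρ₀) * exp (-((ρ₀ ^ 2 / 8) / u) - 1 / 2 * u) := by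
    rw [← exp_add]; gcongr; linarith
  rw [macdonaldKernelDeriv, norm_mul, norm_of_nonneg (macdonaldKernel_pos α x hu).le,
    Real.norm_eq_abs, macdonaldKernel]
  calc |1 - x / u| * (exp (x - x ^ 2 / (2 * u) - u / 2) * u ^ (α - 1))
      ≤ (1 + 2 * ρ₀ / u) *
          (exp (2 * ρ₀) * exp (-((ρ₀ ^ 2 / 8) / u) - 1 / 2 * u) * u ^ (α - 1)) := by
        gcongr
        exact (abs_nonneg _).trans hfactor
    _ = _ := by ring

lemma hasDerivAt_integral_macdonaldKernel {ρ₀ : ℝ} (hρ₀ : 0 < ρ₀) :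
    HasDerivAt (fun ρ => ∫ u in Ioi 0, macdonaldKernel α ρ u)
      (∫ u in Ioi 0, macdonaldKernelDeriv α ρ₀ u) ρ₀ := by
  have hbound : IntegrableOn (fun u => exp (2 * ρ₀) *
      ((1 + 2 * ρ₀ / u) * (exp (-((ρ₀ ^ 2 / 8) / u) - 1 / 2 * u) * u ^ (α - 1)))) (Ioi 0) :=
    (integrableOn_one_add_div_mul_exp_neg_div_sub_mul_mul_rpow (by positivity) one_half_pos
      (2 * ρ₀) (α - 1)).const_mul (exp (2 * ρ₀))
  refine (hasDerivAt_integral_of_dominated_loc_of_deriv_le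
    (Ioo_mem_nhds (by linarith : ρ₀ / 2 < ρ₀) (by linarith : ρ₀ < 2 * ρ₀)) ?_
    (integrableOn_macdonaldKernel α hρ₀)
    (integrableOn_macdonaldKernelDeriv α hρ₀).aestronglyMeasurable ?_ hbound
    (.of_forall fun u _ _ => hasDerivAt_macdonaldKernel α _ u)).2
  · exact (lt_mem_nhds hρ₀).mono fun x hx =>
      (integrableOn_macdonaldKernel α hx).aestronglyMeasurable
  · exact (ae_restrict_iff' measurableSet_Ioi).2 (.of_forall fun u hu x hx =>
      norm_macdonaldKernelDeriv_le α hx hu)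

lemma macdonaldKernelDeriv_add_comp_const_div {ρ u : ℝ} (hρ : 0 < ρ) (hu : 0 < u) :
    macdonaldKernelDeriv α ρ u + (ρ ^ 2 / u ^ 2) • macdonaldKernelDeriv α ρ (ρ ^ 2 / u) =
      (1 - ρ / u) * (1 - (ρ / u) ^ (2 * α - 1)) * macdonaldKernel α ρ u := by
  have hpow : (ρ / u) ^ (2 * α - 1) = (ρ / u) ^ (2 * (α - 1)) * (ρ / u) := by
    rw [← rpow_add_one (div_pos hρ hu).ne']; ring_nf
  simp only [macdonaldKernelDeriv, smul_eq_mul, macdonaldKernel_const_div α hρ hu, hpow]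
  field_simp
  ring

lemma one_sub_mul_one_sub_rpow_pos {x p : ℝ} (hx : 0 < x) (hx₁ : x ≠ 1) (hp : 0 < p) :
    0 < (1 - x) * (1 - x ^ p) := by
  rcases hx₁.lt_or_gt with hlt | hgt
  · exact mul_pos (by linarith) (by linarith [rpow_lt_one hx.le hlt hp])
  · exact mul_pos_of_neg_of_neg (by linarith) (by linarith [one_lt_rpow hgt hp])

lemma integral_macdonaldKernelDeriv_pos (hα : 1 / 2 < α) {ρ : ℝ} (hρ : 0 < ρ) :
    0 < ∫ u in Ioi 0, macdonaldKernelDeriv α ρ u := by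
  set g := fun u => (1 - ρ / u) * (1 - (ρ / u) ^ (2 * α - 1)) * macdonaldKernel α ρ u
  have hρ2 : 0 < ρ ^ 2 := by positivity
  have hd := integrableOn_macdonaldKernelDeriv α hρ
  have hd' := (integrableOn_Ioi_comp_const_div_iff _ hρ2).2 hd
  have hsymm : EqOn (fun u => macdonaldKernelDeriv α ρ u +
      (ρ ^ 2 / u ^ 2) • macdonaldKernelDeriv α ρ (ρ ^ 2 / u)) g (Ioi 0) :=
    fun u hu => macdonaldKernelDeriv_add_comp_const_div α hρ hu
  have htwice : 2 * ∫ u in Ioi 0, macdonaldKernelDeriv α ρ u = ∫ u in Ioi 0, g u := by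
    rw [← setIntegral_congr_fun measurableSet_Ioi hsymm, integral_add hd hd',
      integral_comp_const_div_Ioi _ hρ2]
    ring
  have hg_pos : ∀ u, 0 < u → u ≠ ρ → 0 < g u := fun u hu hne =>
    mul_pos (one_sub_mul_one_sub_rpow_pos (div_pos hρ hu) (div_ne_one_of_ne hne.symm)
      (by linarith)) (macdonaldKernel_pos α ρ hu)
  have hg_nonneg : 0 ≤ᵐ[volume.restrict (Ioi 0)] g := by
    refine (ae_restrict_iff' measurableSet_Ioi).2 (.of_forall fun u (hu : 0 < u) => ?_)
    rcases eq_or_ne u ρ with rfl | hne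
    · simp [g, div_self hu.ne']
    · exact (hg_pos u hu hne).le
  suffices 0 < ∫ u in Ioi 0, g u by linarith
  rw [setIntegral_pos_iff_support_of_nonneg_ae hg_nonneg
    ((hd.add hd').congr_fun hsymm measurableSet_Ioi)]
  have hsupp : Ioi ρ ⊆ Function.support g ∩ Ioi 0 := fun u (hu : ρ < u) =>
    ⟨(hg_pos u (hρ.trans hu) hu.ne').ne', hρ.trans hu⟩
  exact (measure_mono hsupp).trans_lt' (by simp)

end macdonaldKernel

lemma macdonaldK_nonneg (α r : ℝ) : 0 ≤ macdonaldK α r :=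
  mul_nonneg one_half_pos.le (setIntegral_nonneg measurableSet_Ioi fun s (hs : 0 < s) =>
    mul_nonneg (exp_pos _).le (rpow_nonneg hs.le _))

lemma strictMonoOn_exp_mul_rpow_mul_macdonaldK {α : ℝ} (hα : 1 / 2 < α) :
    StrictMonoOn (fun r => exp r * r ^ α * macdonaldK α r) (Ioi 0) := by
  have hJ : StrictMonoOn (fun ρ => ∫ u in Ioi 0, macdonaldKernel α ρ u) (Ioi 0) := by
    refine strictMonoOn_of_hasDerivWithinAt_pos (convex_Ioi 0)
      (fun ρ (hρ : 0 < ρ) =>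
        (hasDerivAt_integral_macdonaldKernel α hρ).continuousAt.continuousWithinAt)
      (fun ρ hρ =>
        (hasDerivAt_integral_macdonaldKernel α (interior_subset hρ)).hasDerivWithinAt)
      (fun ρ hρ => integral_macdonaldKernelDeriv_pos α hα (interior_subset hρ))
  intro r (hr : 0 < r) R (hR : 0 < R) hrR
  have := hJ hr hR hrR
  simp only [integral_macdonaldKernel α hr, integral_macdonaldKernel α hR] at this
  linarith

theorem macdonaldK_ratio_lt (α r R : ℝ) (hα : 1 / 2 < α) (hr : 0 < r) (hrR : r < R) :
    macdonaldK α r / macdonaldK α R < Real.exp (R - r) * (R / r) ^ α := by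
  have hR : 0 < R := hr.trans hrR
  have hmono : exp r * r ^ α * macdonaldK α r < exp R * R ^ α * macdonaldK α R :=
    strictMonoOn_exp_mul_rpow_mul_macdonaldK hα hr hR hrR
  have hKR : 0 < macdonaldK α R :=
    pos_of_mul_pos_right ((mul_nonneg (by positivity) (macdonaldK_nonneg α r)).trans_lt hmono)
      (by positivity)
  rw [div_lt_iff₀ hKR, exp_sub, div_rpow hR.le hr.le]
  calc macdonaldK α r = exp r * r ^ α * macdonaldK α r / (exp r * r ^ α) := by field_simp
    _ < exp R * R ^ α * macdonaldK α R / (exp r * r ^ α) := by gcongr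
    _ = exp R / exp r * (R ^ α / r ^ α) * macdonaldK α R := by field_simp
end

section
/- For all real θ > 0 and real s ≥ 1, the ratio sinhc(θ(s−1)/2) · sinhc(θ(s+1)/2) / sinhc(θ) is at most e^{θ(s−1)}, where sinhc x = sinh x / x (sinhc 0 = 1). -/
/-!
Write `sinhc x = exp x * g x` with `g x = (1 - exp (-2x)) / (2x)`. Here `g ≤ 1` since
`1 - exp (-t) ≤ t`, and `g` is antitone on `(0, ∞)`, being a secant slope of the convex function
`exp` at `0`. With `a = θ(s-1)/2` and `b = θ(s+1)/2 = a + θ ≥ θ` this gives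
`sinhc a ≤ exp a` and `sinhc b / sinhc θ ≤ exp (b - θ)`, whose product is `exp (2a) = exp (θ(s-1))`.
-/

open Real

/-- `sinhc x = sinh x / x`, with `sinhc 0 = 1`. -/
noncomputable def sinhc (x : ℝ) : ℝ := if x = 0 then 1 else Real.sinh x / x

namespace Real

theorem antitoneOn_one_sub_exp_neg_div : AntitoneOn (fun x => (1 - exp (-x)) / x) (Set.Ioi 0) := by
  intro x hx y hy hxy
  have hslope := convexOn_exp.secant_mono (a := 0) trivial trivial trivial
    (neg_ne_zero.2 (ne_of_gt hy)) (neg_ne_zero.2 (ne_of_gt hx)) (neg_le_neg hxy)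
  simpa only [exp_zero, sub_zero, div_neg, neg_div, neg_le_neg_iff, ← neg_sub (1 : ℝ)] using hslope

end Real

section Sinhc

variable {x y : ℝ}

theorem sinhc_of_ne_zero (hx : x ≠ 0) : sinhc x = sinh x / x := if_neg hx

theorem sinhc_pos (x : ℝ) : 0 < sinhc x := by
  rcases lt_trichotomy x 0 with hx | rfl | hx
  · rw [sinhc_of_ne_zero hx.ne]
    exact div_pos_of_neg_of_neg (sinh_neg_iff.2 hx) hx
  · simp [sinhc]
  · rw [sinhc_of_ne_zero hx.ne']
    exact div_pos (sinh_pos_iff.2 hx) hx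

theorem exp_neg_mul_sinhc (hx : x ≠ 0) :
    exp (-x) * sinhc x = (1 - exp (-(2 * x))) / (2 * x) := by
  have hexp : exp (-x) * exp (-x) = exp (-(2 * x)) := by rw [← exp_add]; ring_nf
  rw [sinhc_of_ne_zero hx, sinh_eq, ← hexp]
  field_simp
  rw [mul_sub, ← exp_add, neg_add_cancel, exp_zero]
  ring

theorem sinhc_le_exp (hx : 0 ≤ x) : sinhc x ≤ exp x := by
  rcases hx.eq_or_lt with rfl | hx
  · simp [sinhc]
  have hg : exp (-x) * sinhc x ≤ 1 := by
    rw [exp_neg_mul_sinhc hx.ne', div_le_one (by positivity)]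
    linarith [one_sub_le_exp_neg (2 * x)]
  rwa [exp_neg, inv_mul_le_iff₀ (exp_pos x), mul_one] at hg

theorem antitoneOn_exp_neg_mul_sinhc : AntitoneOn (fun x => exp (-x) * sinhc x) (Set.Ioi 0) := by
  intro x hx y hy hxy
  simp only [exp_neg_mul_sinhc (ne_of_gt hx), exp_neg_mul_sinhc (ne_of_gt hy)]
  exact antitoneOn_one_sub_exp_neg_div (Set.mem_Ioi.2 (mul_pos two_pos hx))
    (Set.mem_Ioi.2 (mul_pos two_pos hy)) (by linarith)

theorem sinhc_div_sinhc_le (hx : 0 < x) (hxy : x ≤ y) : sinhc y / sinhc x ≤ exp (y - x) := by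
  have h := antitoneOn_exp_neg_mul_sinhc hx (hx.trans_le hxy) hxy
  rw [div_le_iff₀ (sinhc_pos x), sub_eq_add_neg, exp_add, mul_assoc]
  calc sinhc y = exp y * (exp (-y) * sinhc y) := by
        rw [← mul_assoc, ← exp_add, add_neg_cancel, exp_zero, one_mul]
    _ ≤ exp y * (exp (-x) * sinhc x) := by gcongr

end Sinhc

theorem sinhc_ratio_le (θ s : ℝ) (hθ : 0 < θ) (hs : 1 ≤ s) :
    sinhc (θ * (s - 1) / 2) * sinhc (θ * (s + 1) / 2) / sinhc θ
      ≤ Real.exp (θ * (s - 1)) := by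
  have ha : 0 ≤ θ * (s - 1) / 2 := by nlinarith
  have hb : θ ≤ θ * (s + 1) / 2 := by nlinarith
  calc sinhc (θ * (s - 1) / 2) * sinhc (θ * (s + 1) / 2) / sinhc θ
      = sinhc (θ * (s - 1) / 2) * (sinhc (θ * (s + 1) / 2) / sinhc θ) := mul_div_assoc _ _ _
    _ ≤ exp (θ * (s - 1) / 2) * exp (θ * (s + 1) / 2 - θ) :=
        mul_le_mul (sinhc_le_exp ha) (sinhc_div_sinhc_le hθ hb)
          (div_pos (sinhc_pos _) (sinhc_pos _)).le (exp_pos _).le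
    _ = exp (θ * (s - 1)) := by rw [← exp_add]; ring_nf
end
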